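/- arXiv:2010.01102 — 3 statements merged into one kernel-verified Lean document; each statement's English description precedes it below -/
import Mathlib

section
/- Let B be a blossom in the expanded graph and uv an expanded edge with expansion path u, u v̄, v ū, v, where the placement rule is: the minimal blossom containing u v̄ is B_u if uv ∈ I(B_u) and B_{uv} otherwise (symmetrically for v ū). Then: (i) if u, v ∉ B then u v̄, v ū ∉ B; (ii) if u ∈ B and v ∉ B then v ū ∉ B, and u v̄ ∈ B iff uv ∈ I(B); (iii) if u, v ∈ B then u v̄, v ū ∈ B. -/
open scoped Classical in
/-- Placement of e-vertices of an expanded edge in the laminar family of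
blossoms.  `L` is a laminar family of vertex sets (blossoms); `Bu`, `Bv`,
`Buv` are the minimal blossoms containing `u`, `v`, and both `u` and `v`
respectively; `Imem B` means `uv ∈ I(B)`.  The e-vertex `a = u v̄` is placed so
that its minimal blossom is `Bu` if `uv ∈ I(B_u)` and `B_{uv}` otherwise
(symmetrically `b = v ū`).  For an edge `uv` leaving a blossom `B ⊇ B_u`,
`uv ∈ I(B_u)` iff `uv ∈ I(B)`.  Then for every blossom `B`:
(i) `u, v ∉ B → a, b ∉ B`;
(ii) `u ∈ B, v ∉ B → b ∉ B` and (`a ∈ B ↔ uv ∈ I(B)`);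
(iii) `u, v ∈ B → a, b ∈ B`. -/
theorem stmt4 {W : Type*} (L : Set (Set W))
    (hlam : ∀ A ∈ L, ∀ B ∈ L, A ⊆ B ∨ B ⊆ A ∨ Disjoint A B)
    (u v a b : W) (Imem : Set W → Prop)
    (Bu Bv Buv : Set W)
    (hBu : Bu ∈ L ∧ u ∈ Bu ∧ ∀ B ∈ L, u ∈ B → Bu ⊆ B)
    (hBv : Bv ∈ L ∧ v ∈ Bv ∧ ∀ B ∈ L, v ∈ B → Bv ⊆ B)
    (hBuv : Buv ∈ L ∧ u ∈ Buv ∧ v ∈ Buv ∧ ∀ B ∈ L, u ∈ B → v ∈ B → Buv ⊆ B)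
    (ha : ∀ B ∈ L, (a ∈ B ↔ (if Imem Bu then Bu else Buv) ⊆ B))
    (hb : ∀ B ∈ L, (b ∈ B ↔ (if Imem Bv then Bv else Buv) ⊆ B))
    (hIu : ∀ B ∈ L, u ∈ B → v ∉ B → (Imem Bu ↔ Imem B))
    (hIv : ∀ B ∈ L, v ∈ B → u ∉ B → (Imem Bv ↔ Imem B)) :
    ∀ B ∈ L,
      ((u ∉ B ∧ v ∉ B) → (a ∉ B ∧ b ∉ B)) ∧
      ((u ∈ B ∧ v ∉ B) → (b ∉ B ∧ (a ∈ B ↔ Imem B))) ∧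
      ((u ∈ B ∧ v ∈ B) → (a ∈ B ∧ b ∈ B)) := by
  obtain ⟨hBuL, huBu, hBumin⟩ := hBu
  obtain ⟨hBvL, hvBv, hBvmin⟩ := hBv
  obtain ⟨hBuvL, huBuv, hvBuv, hBuvmin⟩ := hBuv
  intro B hB
  refine ⟨?_, ?_, ?_⟩
  · rintro ⟨hu, hv⟩
    constructor
    · intro haB
      have := (ha B hB).1 haB
      split_ifs at this with h
      · exact hu (this huBu)
      · exact hu (this huBuv)
    · intro hbB
      have := (hb B hB).1 hbB
      split_ifs at this with h
      · exact hv (this hvBv)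
      · exact hv (this hvBuv)
  · rintro ⟨hu, hv⟩
    constructor
    · intro hbB
      have := (hb B hB).1 hbB
      split_ifs at this with h
      · exact hv (this hvBv)
      · exact hv (this hvBuv)
    · rw [ha B hB, ← hIu B hB hu hv]
      by_cases h : Imem Bu
      · simp only [if_pos h]
        exact ⟨fun _ => h, fun _ => hBumin B hB hu⟩
      · simp only [if_neg h]
        constructor
        · intro hsub; exact absurd (hsub hvBuv) hv
        · intro hh; exact absurd hh h
  · rintro ⟨hu, hv⟩
    constructor
    · rw [ha B hB]; split_ifs
      · exact hBumin B hB hu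
      · exact hBuvmin B hB hu hv
    · rw [hb B hB]; split_ifs
      · exact hBvmin B hB hv
      · exact hBuvmin B hB hu hv
end

section
/- Suppose before compression every edge satisfies near-optimality: unmatched edges e have yz(e) ≥ w(e) − 2, matched edges have yz(e) ≤ w(e), and middle expansion edges (u v̄, v ū) are tight with weight 0. Then after compressing every expansion with w(uv) = w(u, u v̄) + w(v, v ū), every compressed edge e = uv satisfies: yz(uv) ≥ w(uv) − 4 if uv is unmatched, and yz(uv) ≤ w(uv) + 2 if uv is matched. -/
/-- Bounds on compressed edges.  Suppose the expansion of `uv` satisfies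
near optimality: the end edges `(u, u v̄)` and `(v, v ū)` have the same matched
status as `uv`, the middle edge `(u v̄, v ū)` (of weight 0) the opposite, with
`yz ≥ w - 2` for unmatched edges and `yz ≤ w` for matched edges, and
`w(uv) = w(u, u v̄) + w(v, v ū)`.  With `E = yz₁ + yz₂ - yzₘ`, and `C = yz(uv)`
after compression satisfying `C ≥ E` for unmatched `uv` and `C ≤ E` for matched
`uv`, every compressed edge satisfies `yz(uv) ≥ w(uv) - 4` if unmatched and
`yz(uv) ≤ w(uv) + 2` if matched. -/
theorem stmt9 (wuv w1 w2 yz1 yz2 yzm C E : ℤ)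
    (hw : wuv = w1 + w2) (hE : E = yz1 + yz2 - yzm) :
    ((w1 - 2 ≤ yz1 ∧ w2 - 2 ≤ yz2 ∧ yzm ≤ 0 ∧ E ≤ C) → wuv - 4 ≤ C) ∧
    ((yz1 ≤ w1 ∧ yz2 ≤ w2 ∧ -2 ≤ yzm ∧ C ≤ E) → C ≤ wuv + 2) := by
  constructor <;> rintro ⟨a,b,c,d⟩ <;> omega
end

section
/- Dissolving a blossom B with no base edge (η(B) = ∅) — i.e., setting y(v) ← y(v) + z(B)/2 for all v ∈ B and z(B) ← 0 — preserves yz(e) for every e ∈ γ(B), strictly decreases yz(e) for every matched e ∈ δ(B) (so yz(e) ≤ w(e) + 2 is preserved), and strictly increases yz(e) for every unmatched e ∈ δ(B) (so yz(e) ≥ w(e) − 4 is preserved). -/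
lemma sum_key {Blossom : Type*} [Fintype Blossom] [DecidableEq Blossom]
    (B₀ : Blossom) (z z' : Blossom → ℤ)
    (hz0 : z' B₀ = 0) (hz : ∀ B, B ≠ B₀ → z' B = z B)
    (S : Finset Blossom) :
    ∑ B ∈ S, z' B = ∑ B ∈ S, z B - (if B₀ ∈ S then z B₀ else 0) := by
  by_cases hB : B₀ ∈ S
  · simp only [hB, if_true]
    rw [← Finset.sum_erase_add S z' hB, ← Finset.sum_erase_add S z hB, hz0]
    have : ∑ B ∈ S.erase B₀, z' B = ∑ B ∈ S.erase B₀, z B :=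
      Finset.sum_congr rfl fun B hB' => hz B (Finset.ne_of_mem_erase hB')
    omega
  · simp only [hB, if_false, sub_zero]
    exact Finset.sum_congr rfl fun B hB' => hz B (by rintro rfl; exact hB hB')


open scoped Classical in
/-- Dissolving a blossom `B₀` with no base edge (`η(B₀) = ∅`): set
`y(v) ← y(v) + z(B₀)/2` for all `v ∈ B₀` and `z(B₀) ← 0` (where
`z(B₀) = 2h`, `h ≥ 0`).  For an edge `(u,v)` with dual value
`y(u) + y(v) + Σ {z(B) : ctb B}` (`ctb B` meaning the edge is in
`γ(B) ∪ I(B)`):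
(i) every `e ∈ γ(B₀)` (both ends in `B₀`, contributing) keeps its dual value;
(ii) every matched `e ∈ δ(B₀)` (which lies in `I(B₀)` since `η(B₀) = ∅`) has
its dual value decreased by `h` — strictly if `z(B₀) > 0` — preserving
`yz(e) ≤ w(e) + 2`;
(iii) every unmatched `e ∈ δ(B₀)` (outside `I(B₀)`) has its dual value
increased by `h` — strictly if `z(B₀) > 0` — preserving `yz(e) ≥ w(e) - 4`. -/
theorem stmt13 {V Blossom : Type*} [Fintype Blossom]
    (mem : Blossom → Set V) (B₀ : Blossom)
    (y y' : V → ℤ) (z z' : Blossom → ℤ) (h : ℤ)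
    (hh : 0 ≤ h) (hzB : z B₀ = 2 * h)
    (hy : ∀ v : V, y' v = y v + (if v ∈ mem B₀ then h else 0))
    (hz0 : z' B₀ = 0) (hz : ∀ B, B ≠ B₀ → z' B = z B) :
    (∀ (u v : V) (ctb : Blossom → Prop),
      u ∈ mem B₀ → v ∈ mem B₀ → ctb B₀ →
      y' u + y' v + ∑ B ∈ Finset.univ.filter (fun B => ctb B), z' B =
        y u + y v + ∑ B ∈ Finset.univ.filter (fun B => ctb B), z B) ∧
    (∀ (u v : V) (ctb : Blossom → Prop) (w : ℤ),
      u ∈ mem B₀ → v ∉ mem B₀ → ctb B₀ →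
      (y' u + y' v + ∑ B ∈ Finset.univ.filter (fun B => ctb B), z' B =
          y u + y v + ∑ B ∈ Finset.univ.filter (fun B => ctb B), z B - h) ∧
      (0 < z B₀ →
        y' u + y' v + ∑ B ∈ Finset.univ.filter (fun B => ctb B), z' B <
          y u + y v + ∑ B ∈ Finset.univ.filter (fun B => ctb B), z B) ∧
      (y u + y v + ∑ B ∈ Finset.univ.filter (fun B => ctb B), z B ≤ w + 2 →
        y' u + y' v + ∑ B ∈ Finset.univ.filter (fun B => ctb B), z' B ≤ w + 2)) ∧
    (∀ (u v : V) (ctb : Blossom → Prop) (w : ℤ),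
      u ∈ mem B₀ → v ∉ mem B₀ → ¬ ctb B₀ →
      (y' u + y' v + ∑ B ∈ Finset.univ.filter (fun B => ctb B), z' B =
          y u + y v + ∑ B ∈ Finset.univ.filter (fun B => ctb B), z B + h) ∧
      (0 < z B₀ →
        y u + y v + ∑ B ∈ Finset.univ.filter (fun B => ctb B), z B <
          y' u + y' v + ∑ B ∈ Finset.univ.filter (fun B => ctb B), z' B) ∧
      (w - 4 ≤ y u + y v + ∑ B ∈ Finset.univ.filter (fun B => ctb B), z B →
        w - 4 ≤ y' u + y' v + ∑ B ∈ Finset.univ.filter (fun B => ctb B), z' B)) := by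
  classical
  have key : ∀ (ctb : Blossom → Prop),
      ∑ B ∈ Finset.univ.filter (fun B => ctb B), z' B =
      ∑ B ∈ Finset.univ.filter (fun B => ctb B), z B -
        (if ctb B₀ then z B₀ else 0) := by
    intro ctb
    rw [sum_key B₀ z z' hz0 hz]
    congr 1
    simp
  refine ⟨?_, ?_, ?_⟩
  · intro u v ctb hu hv hc
    rw [hy u, hy v, key ctb]
    simp [hu, hv, hc, hzB]
    ring
  · intro u v ctb w hu hv hc
    have e : y' u + y' v + ∑ B ∈ Finset.univ.filter (fun B => ctb B), z' B =
        y u + y v + ∑ B ∈ Finset.univ.filter (fun B => ctb B), z B - h := by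
      rw [hy u, hy v, key ctb]
      simp [hu, hv, hc, hzB]
      ring
    exact ⟨e, fun hpos => by omega, fun hle => by omega⟩
  · intro u v ctb w hu hv hc
    have e : y' u + y' v + ∑ B ∈ Finset.univ.filter (fun B => ctb B), z' B =
        y u + y v + ∑ B ∈ Finset.univ.filter (fun B => ctb B), z B + h := by
      rw [hy u, hy v, key ctb]
      simp [hu, hv, hc, hzB]
      ring
    exact ⟨e, fun hpos => by omega, fun hle => by omega⟩
end
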